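/- Let n ≥ 1 be an integer and let f satisfy (A1), (A2), (A3). If (u,v) is a positive solution of the system −u''(r) − ((n−1)/r) u'(r) = f(r, u(r), v(r)) and −v''(r) − ((n−1)/r) v'(r) = f(r, v(r), u(r)) for r > 0, with u'(0) = v'(0) = 0 and u(r), v(r) → 0 as r → ∞, then u = v, and moreover there exists c > 0 such that u(r) + |u'(r)| ≤ c·e^{−√m·r} for all r > 0, where m is the positive constant from (A2). -/

import Mathlib

open Real Set Filter

/-- `u` is twice continuously differentiable on `[0,∞)`, with first and second
derivative functions `u'` and `u''`. -/
def C2 (u u' u'' : ℝ → ℝ) : Prop :=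
  (∀ r ∈ Set.Ici (0:ℝ), HasDerivWithinAt u (u' r) (Set.Ici 0) r) ∧
  (∀ r ∈ Set.Ici (0:ℝ), HasDerivWithinAt u' (u'' r) (Set.Ici 0) r) ∧
  ContinuousOn u'' (Set.Ici 0)

/-- Assumption (A1): `f : [0,∞)³ → ℝ` is continuous, locally Lipschitz on `(0,∞)³`,
and satisfies the stated growth bound. -/
def A1 (f : ℝ → ℝ → ℝ → ℝ) : Prop :=
  ContinuousOn (fun p : ℝ × ℝ × ℝ => f p.1 p.2.1 p.2.2)
    {p : ℝ × ℝ × ℝ | 0 ≤ p.1 ∧ 0 ≤ p.2.1 ∧ 0 ≤ p.2.2} ∧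
  (∀ p : ℝ × ℝ × ℝ, 0 < p.1 → 0 < p.2.1 → 0 < p.2.2 →
    ∃ K : NNReal, ∃ δ > 0, LipschitzOnWith K (fun p : ℝ × ℝ × ℝ => f p.1 p.2.1 p.2.2)
      (Metric.ball p δ ∩ {p : ℝ × ℝ × ℝ | 0 < p.1 ∧ 0 < p.2.1 ∧ 0 < p.2.2})) ∧
  (∃ p : ℝ, 1 < p ∧ ∃ C : ℝ, 0 < C ∧ ∀ r z₁ z₂ : ℝ, 0 ≤ r → 0 ≤ z₁ → 0 ≤ z₂ →
    |f r z₁ z₂| ≤ C * (|z₁| + |z₂| + |z₁| ^ p + |z₂| ^ p))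

/-- `(u,v)` (with derivative data) is a positive solution of the radial system
`-u'' - ((n-1)/r) u' = f(r,u,v)`, `-v'' - ((n-1)/r) v' = f(r,v,u)` on `(0,∞)`,
with `u'(0) = v'(0) = 0` and `u(r), v(r) → 0` as `r → ∞`. -/
def IsPosSol (n : ℕ) (f : ℝ → ℝ → ℝ → ℝ) (u u' u'' v v' v'' : ℝ → ℝ) : Prop :=
  C2 u u' u'' ∧ C2 v v' v'' ∧
  (∀ r : ℝ, 0 ≤ r → 0 < u r ∧ 0 < v r) ∧
  (∀ r : ℝ, 0 < r → -u'' r - ((n : ℝ) - 1) / r * u' r = f r (u r) (v r)) ∧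
  (∀ r : ℝ, 0 < r → -v'' r - ((n : ℝ) - 1) / r * v' r = f r (v r) (u r)) ∧
  u' 0 = 0 ∧ v' 0 = 0 ∧
  Tendsto u atTop (nhds 0) ∧ Tendsto v atTop (nhds 0)

/-!
Adding the two equations, the sum part of (A2) makes `u + v` a subsolution of `-Δ + m` near
infinity, so the maximum principle gives `u + v ≤ c e^{-√m r}`; the growth bound in (A1) turns
the equation into `|(r^{n-1} u')'| ≤ C r^{n-1} e^{-√m r}`, which transfers the decay to `u'`.

For `u ≤ v`, consider the Wronskian `q = r^{n-1} (u' v - u v')`. By the equations,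
`q' = r^{n-1} (f(r,v,u) u - f(r,u,v) v)`, which (A3) makes positive wherever `u > v`. On a maximal
interval where `u > v`, `q ≥ 0` at the left end (`q(0) = 0`, and `u' ≥ v'` where `u - v`
starts being positive) and `q ≤ 0` at the right end (`u' ≤ v'` where `u - v` stops being positive,
and `q → 0` at infinity by the exponential decay), contradicting the strict growth of `q`.
Hence `u ≤ v`, and `u = v` by symmetry.
-/

open Topology

namespace C2

variable {u u' u'' : ℝ → ℝ}

theorem continuousOn (hu : C2 u u' u'') : ContinuousOn u (Ici 0) :=
  fun r hr => (hu.1 r hr).continuousWithinAt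

theorem continuousOn_deriv (hu : C2 u u' u'') : ContinuousOn u' (Ici 0) :=
  fun r hr => (hu.2.1 r hr).continuousWithinAt

theorem hasDerivAt (hu : C2 u u' u'') {r : ℝ} (hr : 0 < r) : HasDerivAt u (u' r) r :=
  (hu.1 r hr.le).hasDerivAt (Ici_mem_nhds hr)

theorem hasDerivAt_deriv (hu : C2 u u' u'') {r : ℝ} (hr : 0 < r) : HasDerivAt u' (u'' r) r :=
  (hu.2.1 r hr.le).hasDerivAt (Ici_mem_nhds hr)

end C2

theorem HasDerivAt.pow_mul_of_pos {φ : ℝ → ℝ} {φ' r : ℝ} (k : ℕ) (hφ : HasDerivAt φ φ' r)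
    (hr : 0 < r) : HasDerivAt (fun s => s ^ k * φ s) (r ^ k * (φ' + k / r * φ r)) r := by
  refine ((hasDerivAt_pow k r).mul hφ).congr_deriv ?_
  rcases k with _ | k
  · simp
  · field_simp
    push_cast
    ring

theorem IsLocalMax.nonpos_of_hasDerivAt_deriv {h h' : ℝ → ℝ} {x h'' : ℝ} (hmax : IsLocalMax h x)
    (hd : ∀ᶠ y in 𝓝 x, HasDerivAt h (h' y) y) (hd2 : HasDerivAt h' h'' x) : h'' ≤ 0 := by
  by_contra! hpos
  have hx : h' x = 0 := hmax.hasDerivAt_eq_zero hd.self_of_nhds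
  have hslope : ∀ᶠ y in 𝓝[>] x, 0 < slope h' x y :=
    ((hasDerivAt_iff_tendsto_slope.1 hd2).mono_left (nhdsGT_le_nhdsNE x)).eventually
      (eventually_gt_nhds hpos)
  have hright : ∀ᶠ y in 𝓝[>] x, 0 < h' y ∧ HasDerivAt h (h' y) y ∧ h y ≤ h x := by
    filter_upwards [hslope, self_mem_nhdsWithin, nhdsWithin_le_nhds hd,
      nhdsWithin_le_nhds hmax] with y hy hxy hdy hmaxy
    exact ⟨pos_of_slope_pos hxy hy hx, hdy, hmaxy⟩
  obtain ⟨b, hxb : x < b, hsub⟩ := mem_nhdsGT_iff_exists_Ioo_subset.1 hright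
  obtain ⟨y, hxy, hyb⟩ := exists_between hxb
  have hcont : ContinuousOn h (Icc x y) := by
    intro z hz
    rcases hz.1.eq_or_lt with rfl | hxz
    · exact hd.self_of_nhds.continuousAt.continuousWithinAt
    · exact (hsub ⟨hxz, hz.2.trans_lt hyb⟩).2.1.continuousAt.continuousWithinAt
  obtain ⟨ζ, hζ, hζeq⟩ := exists_hasDerivAt_eq_slope h h' hxy hcont
    fun z hz => (hsub ⟨hz.1, hz.2.trans hyb⟩).2.1
  have hζpos := (hsub ⟨hζ.1, hζ.2.trans hyb⟩).1
  rw [hζeq, div_pos_iff_of_pos_right (sub_pos.2 hxy)] at hζpos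
  linarith [(hsub ⟨hxy, hyb⟩).2.2]

theorem nonpos_of_mul_le_deriv2_add {h h' h'' c : ℝ → ℝ} {a μ : ℝ} (hμ : 0 < μ)
    (hcont : ContinuousOn h (Ici a)) (hd : ∀ r > a, HasDerivAt h (h' r) r)
    (hd2 : ∀ r > a, HasDerivAt h' (h'' r) r) (hineq : ∀ r > a, μ * h r ≤ h'' r + c r * h' r)
    (ha : h a ≤ 0) (hlim : Tendsto h atTop (𝓝 0)) : ∀ r ≥ a, h r ≤ 0 := by
  by_contra! ⟨x, hax, hx⟩
  have hfar : ∀ᶠ y in cocompact ℝ ⊓ 𝓟 (Ici a), h y ≤ h x := by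
    rw [cocompact_eq_atBot_atTop, inf_sup_right, eventually_sup]
    constructor
    · exact eventually_inf_principal.2 <|
        (eventually_lt_atBot a).mono fun y hy hya => absurd hya (not_le.2 hy)
    · exact (hlim.eventually (ge_mem_nhds hx)).filter_mono inf_le_left
  obtain ⟨r₀, hr₀, hmax⟩ := hcont.exists_isMaxOn' isClosed_Ici hax hfar
  have hr₀x : h x ≤ h r₀ := hmax hax
  have har₀ : a < r₀ := lt_of_le_of_ne hr₀ (by rintro rfl; linarith)
  have hloc : IsLocalMax h r₀ := hmax.isLocalMax (Ici_mem_nhds har₀)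
  have hd0 : h' r₀ = 0 := hloc.hasDerivAt_eq_zero (hd r₀ har₀)
  have hd2_nonpos := hloc.nonpos_of_hasDerivAt_deriv
    (eventually_of_mem (Ioi_mem_nhds har₀) hd) (hd2 r₀ har₀)
  have := hineq r₀ har₀
  rw [hd0, mul_zero, add_zero] at this
  nlinarith

theorem le_mul_exp_of_mul_le_deriv2_add {s s' s'' c : ℝ → ℝ} {a m : ℝ} (hm : 0 < m)
    (hs : ContinuousOn s (Ici a)) (hd : ∀ r > a, HasDerivAt s (s' r) r)
    (hd2 : ∀ r > a, HasDerivAt s' (s'' r) r) (hc : ∀ r > a, 0 ≤ c r)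
    (hineq : ∀ r > a, m * s r ≤ s'' r + c r * s' r) (ha : 0 ≤ s a)
    (hlim : Tendsto s atTop (𝓝 0)) : ∀ r ≥ a, s r ≤ s a * exp (-√m * (r - a)) := by
  set g : ℝ → ℝ := fun r => s a * exp (-√m * (r - a))
  have hsqrt : √m * √m = m := mul_self_sqrt hm.le
  have hg : ∀ r, HasDerivAt g (-√m * g r) r := fun r =>
    ((((hasDerivAt_id r).sub_const a).const_mul (-√m)).exp.const_mul (s a)).congr_deriv
      (by simp only [g, id_eq]; ring)
  have hg' : ∀ r, HasDerivAt (fun r => -√m * g r) (m * g r) r := fun r =>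
    ((hg r).const_mul (-√m)).congr_deriv (by linear_combination g r * hsqrt)
  have hg_lim : Tendsto g atTop (𝓝 0) := by
    have : Tendsto (fun r => √m * (r - a)) atTop atTop :=
      (tendsto_atTop_add_const_right _ (-a) tendsto_id).const_mul_atTop (sqrt_pos.2 hm)
    simpa [g, neg_mul] using (tendsto_exp_neg_atTop_nhds_zero.comp this).const_mul (s a)
  have hcomp := nonpos_of_mul_le_deriv2_add hm (h := fun r => s r - g r)
    (h' := fun r => s' r - -√m * g r) (h'' := fun r => s'' r - m * g r) (c := c)
    (hs.sub (by fun_prop)) (fun r hr => (hd r hr).sub (hg r)) (fun r hr => (hd2 r hr).sub (hg' r))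
    (fun r hr => by
      have hgr : 0 ≤ g r := by positivity
      have := mul_nonneg (mul_nonneg (hc r hr) (sqrt_nonneg m)) hgr
      nlinarith [hineq r hr])
    (by simp [g]) (by simpa using hlim.sub hg_lim)
  exact fun r hr => sub_nonpos.1 (hcomp r hr)

theorem exists_le_mul_exp_of_eventually_le {g : ℝ → ℝ} {σ c : ℝ} (hσ : 0 ≤ σ)
    (hg : ContinuousOn g (Ici 0)) (hfar : ∀ᶠ r in atTop, g r ≤ c * exp (-σ * r)) :
    ∃ C > 0, ∀ r ≥ 0, g r ≤ C * exp (-σ * r) := by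
  obtain ⟨R, hR⟩ := eventually_atTop.1 hfar
  obtain ⟨B, hB⟩ := isCompact_Icc.exists_bound_of_continuousOn
    (hg.mono (Icc_subset_Ici_self : Icc 0 (max R 0) ⊆ Ici 0))
  refine ⟨|c| + |B| * exp (σ * max R 0) + 1, by positivity, fun r hr => ?_⟩
  have he := exp_pos (-σ * r)
  rcases le_total R r with hRr | hrR
  · have hc : c ≤ |c| + |B| * exp (σ * max R 0) + 1 := by
      have : 0 ≤ |B| * exp (σ * max R 0) := by positivity
      linarith [le_abs_self c]
    exact (hR r hRr).trans (mul_le_mul_of_nonneg_right hc he.le)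
  · have hgB : g r ≤ |B| :=
      (le_abs_self _).trans ((hB r ⟨hr, le_max_of_le_left hrR⟩).trans (le_abs_self B))
    have h1 : 1 ≤ exp (σ * max R 0) * exp (-σ * r) := by
      rw [← exp_add]
      exact one_le_exp (by nlinarith [le_max_left R 0])
    nlinarith [abs_nonneg c, abs_nonneg B]

/-- The mean value theorem gives a point `ξ ∈ (r - 1, r)` with `|u' ξ| ≤ 2M`, and the bound on
`(s^k u')' = s^k (u'' + k u' / s)` controls the change of `s^k u'` from `ξ` to `r`. -/
theorem C2.abs_deriv_le_of_abs_le {k : ℕ} {u u' u'' : ℝ → ℝ} {r M N : ℝ} (hu : C2 u u' u'')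
    (hr : 1 ≤ r) (hM : ∀ s ∈ Icc (r - 1) r, |u s| ≤ M)
    (hN : ∀ s ∈ Ioc (r - 1) r, |u'' s + k / s * u' s| ≤ N) : |u' r| ≤ 2 * M + N := by
  obtain ⟨ξ, hξ, hξeq⟩ := exists_hasDerivAt_eq_slope u u' (sub_one_lt r)
    (hu.continuousOn.mono fun s hs => (by linarith [hs.1] : (0:ℝ) ≤ s))
    fun s hs => hu.hasDerivAt (by linarith [hs.1])
  have hξ0 : 0 < ξ := by linarith [hξ.1]
  have hu'ξ : |u' ξ| ≤ 2 * M := by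
    rw [hξeq, sub_sub_cancel, div_one]
    calc |u r - u (r - 1)| ≤ |u r| + |u (r - 1)| := abs_sub _ _
      _ ≤ M + M := add_le_add (hM r ⟨by linarith, le_rfl⟩) (hM (r - 1) ⟨le_rfl, by linarith⟩)
      _ = 2 * M := by ring
  have hN0 : 0 ≤ N := (abs_nonneg _).trans (hN r ⟨by linarith, le_rfl⟩)
  have hP : ∀ s ∈ Icc ξ r, HasDerivWithinAt (fun s => s ^ k * u' s)
      (s ^ k * (u'' s + k / s * u' s)) (Icc ξ r) s := fun s hs =>
    ((hu.hasDerivAt_deriv (hξ0.trans_le hs.1)).pow_mul_of_pos k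
      (hξ0.trans_le hs.1)).hasDerivWithinAt
  have hP' : ∀ s ∈ Icc ξ r, ‖s ^ k * (u'' s + k / s * u' s)‖ ≤ r ^ k * N := by
    intro s hs
    have hs0 : 0 ≤ s := hξ0.le.trans hs.1
    rw [norm_mul, Real.norm_eq_abs, Real.norm_eq_abs, abs_of_nonneg (pow_nonneg hs0 k)]
    exact mul_le_mul (pow_le_pow_left₀ hs0 hs.2 k) (hN s ⟨by linarith [hξ.1, hs.1], hs.2⟩)
      (abs_nonneg _) (by positivity)
  have hmvt := (convex_Icc ξ r).norm_image_sub_le_of_norm_hasDerivWithin_le hP hP'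
    (left_mem_Icc.2 hξ.2.le) (right_mem_Icc.2 hξ.2.le)
  rw [Real.norm_eq_abs, Real.norm_eq_abs, abs_of_pos (sub_pos.2 hξ.2)] at hmvt
  have hrk : 0 < r ^ k := by positivity
  have hPξ : |ξ ^ k * u' ξ| ≤ r ^ k * (2 * M) := by
    rw [abs_mul, abs_of_pos (pow_pos hξ0 k)]
    exact mul_le_mul (pow_le_pow_left₀ hξ0.le hξ.2.le k) hu'ξ (abs_nonneg _) hrk.le
  have hstep : r ^ k * N * (r - ξ) ≤ r ^ k * N :=
    mul_le_of_le_one_right (by positivity) (by linarith [hξ.1])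
  refine le_of_mul_le_mul_left ?_ hrk
  calc r ^ k * |u' r| = |r ^ k * u' r| := by rw [abs_mul, abs_of_pos hrk]
    _ ≤ |ξ ^ k * u' ξ| + r ^ k * N * (r - ξ) := by
      linarith [abs_sub_abs_le_abs_sub (r ^ k * u' r) (ξ ^ k * u' ξ)]
    _ ≤ r ^ k * (2 * M + N) := by linarith

theorem C2.exists_abs_deriv_le_mul_exp {k : ℕ} {u u' u'' : ℝ → ℝ} {σ A B : ℝ} (hσ : 0 ≤ σ)
    (hu : C2 u u' u'') (hA : ∀ r ≥ 0, |u r| ≤ A * exp (-σ * r))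
    (hB : ∀ r > 0, |u'' r + k / r * u' r| ≤ B * exp (-σ * r)) :
    ∃ c > 0, ∀ r ≥ 0, |u' r| ≤ c * exp (-σ * r) := by
  have hA0 : 0 ≤ A :=
    (mul_nonneg_iff_of_pos_right (exp_pos _)).1 ((abs_nonneg _).trans (hA 0 le_rfl))
  have hB0 : 0 ≤ B :=
    (mul_nonneg_iff_of_pos_right (exp_pos _)).1 ((abs_nonneg _).trans (hB 1 one_pos))
  refine exists_le_mul_exp_of_eventually_le hσ hu.continuousOn_deriv.abs
    (c := (2 * A + B) * exp σ) ?_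
  filter_upwards [eventually_ge_atTop 1] with r hr
  have hexp : ∀ s ∈ Icc (r - 1) r, exp (-σ * s) ≤ exp (-σ * (r - 1)) := fun s hs =>
    exp_le_exp.2 (by nlinarith [mul_nonneg hσ (sub_nonneg.2 hs.1)])
  have hshift : exp (-σ * (r - 1)) = exp σ * exp (-σ * r) := by
    rw [← exp_add]; ring_nf
  calc |u' r| ≤ 2 * (A * exp (-σ * (r - 1))) + B * exp (-σ * (r - 1)) :=
        hu.abs_deriv_le_of_abs_le hr
          (fun s hs => (hA s (by linarith [hs.1])).trans
            (mul_le_mul_of_nonneg_left (hexp s hs) hA0))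
          (fun s hs => (hB s (by linarith [hs.1])).trans
            (mul_le_mul_of_nonneg_left (hexp s (Ioc_subset_Icc_self hs)) hB0))
    _ = (2 * A + B) * exp σ * exp (-σ * r) := by rw [hshift]; ring

theorem exists_zero_of_nonpos_of_pos {w : ℝ → ℝ} {a b : ℝ} (hab : a ≤ b)
    (hw : ContinuousOn w (Icc a b)) (ha : w a ≤ 0) (hb : 0 < w b) :
    ∃ α ∈ Ico a b, w α = 0 ∧ ∀ y ∈ Ioc α b, 0 < w y := by
  have hA : IsCompact (Icc a b ∩ w ⁻¹' Iic 0) := isCompact_Icc.of_isClosed_subset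
    (hw.preimage_isClosed_of_isClosed isClosed_Icc isClosed_Iic) inter_subset_left
  have hα := hA.sSup_mem ⟨a, left_mem_Icc.2 hab, ha⟩
  set α := sSup (Icc a b ∩ w ⁻¹' Iic 0)
  have hpos : ∀ y ∈ Ioc α b, 0 < w y := fun y hy => by
    by_contra! hwy
    exact (not_le.2 hy.1) (le_csSup hA.bddAbove ⟨⟨hα.1.1.trans hy.1.le, hy.2⟩, hwy⟩)
  have hαb : α < b := lt_of_le_of_ne hα.1.2 fun h => (not_le.2 hb) (h ▸ hα.2)
  refine ⟨α, ⟨hα.1.1, hαb⟩, le_antisymm hα.2 ?_, hpos⟩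
  exact ContinuousWithinAt.closure_le (by rw [closure_Ioc hαb.ne]; exact left_mem_Icc.2 hαb.le)
    continuousWithinAt_const ((hw α hα.1).mono fun y hy => ⟨hα.1.1.trans hy.1.le, hy.2⟩)
    fun y hy => (hpos y hy).le

theorem exists_zero_of_pos_of_nonpos {w : ℝ → ℝ} {a b : ℝ} (hab : a ≤ b)
    (hw : ContinuousOn w (Icc a b)) (ha : 0 < w a) (hb : w b ≤ 0) :
    ∃ β ∈ Ioc a b, w β = 0 ∧ ∀ y ∈ Ico a β, 0 < w y := by
  have hB : IsCompact (Icc a b ∩ w ⁻¹' Iic 0) := isCompact_Icc.of_isClosed_subset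
    (hw.preimage_isClosed_of_isClosed isClosed_Icc isClosed_Iic) inter_subset_left
  have hβ := hB.sInf_mem ⟨b, right_mem_Icc.2 hab, hb⟩
  set β := sInf (Icc a b ∩ w ⁻¹' Iic 0)
  have hpos : ∀ y ∈ Ico a β, 0 < w y := fun y hy => by
    by_contra! hwy
    exact (not_le.2 hy.2) (csInf_le hB.bddBelow ⟨⟨hy.1, hy.2.le.trans hβ.1.2⟩, hwy⟩)
  have haβ : a < β := lt_of_le_of_ne hβ.1.1 fun h => (not_le.2 ha) (h ▸ hβ.2)
  refine ⟨β, ⟨haβ, hβ.1.2⟩, le_antisymm hβ.2 ?_, hpos⟩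
  exact ContinuousWithinAt.closure_le (by rw [closure_Ico haβ.ne]; exact right_mem_Icc.2 haβ.le)
    continuousWithinAt_const ((hw β hβ.1).mono fun y hy => ⟨hy.1, hy.2.le.trans hβ.1.2⟩)
    fun y hy => (hpos y hy).le

theorem HasDerivAt.nonneg_of_eq_zero_of_pos_right {f : ℝ → ℝ} {f' x : ℝ} (hf : HasDerivAt f f' x)
    (hx : f x = 0) (h : ∀ᶠ y in 𝓝[>] x, 0 < f y) : 0 ≤ f' :=
  ge_of_tendsto ((hasDerivAt_iff_tendsto_slope.1 hf).mono_left (nhdsGT_le_nhdsNE x)) <| by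
    filter_upwards [h, self_mem_nhdsWithin] with y hy hxy
    exact ((slope_pos_iff hxy).2 (hx ▸ hy)).le

theorem HasDerivAt.nonpos_of_eq_zero_of_pos_left {f : ℝ → ℝ} {f' x : ℝ} (hf : HasDerivAt f f' x)
    (hx : f x = 0) (h : ∀ᶠ y in 𝓝[<] x, 0 < f y) : f' ≤ 0 :=
  le_of_tendsto ((hasDerivAt_iff_tendsto_slope.1 hf).mono_left (nhdsLT_le_nhdsNE x)) <| by
    filter_upwards [h, self_mem_nhdsWithin] with y hy hyx
    exact not_lt.1 fun hs => by linarith [(slope_pos_iff_gt hyx).1 hs]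

section Wronskian

variable {w w' q q' : ℝ → ℝ}

theorem pos_of_strictMonoOn_of_zero_left (hw : ContinuousOn w (Ici 0))
    (hw' : ∀ r > 0, HasDerivAt w (w' r) r)
    (hq_mono : ∀ a b, 0 ≤ a → (∀ y ∈ Ioo a b, 0 < w y) → StrictMonoOn q (Icc a b))
    (hq0 : q 0 = 0) (hq_zero : ∀ r > 0, w r = 0 → ∃ ρ ≥ 0, q r = ρ * w' r)
    {r : ℝ} (hr : 0 < r) (hwr : 0 < w r) : 0 < q r := by
  obtain ⟨α, hα0, hαr, hqα, hpos⟩ : ∃ α, 0 ≤ α ∧ α < r ∧ 0 ≤ q α ∧ ∀ y ∈ Ioc α r, 0 < w y := by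
    by_cases h : ∃ a ∈ Icc 0 r, w a ≤ 0
    · obtain ⟨a, ha, hwa⟩ := h
      obtain ⟨α, hα, hwα, hpos⟩ :=
        exists_zero_of_nonpos_of_pos ha.2 (hw.mono fun y hy => ha.1.trans hy.1) hwa hwr
      refine ⟨α, ha.1.trans hα.1, hα.2, ?_, hpos⟩
      rcases (ha.1.trans hα.1).eq_or_lt with hα0 | hα0
      · exact hα0 ▸ hq0.ge
      · obtain ⟨ρ, hρ, hqα⟩ := hq_zero α hα0 hwα
        exact hqα ▸ mul_nonneg hρ ((hw' α hα0).nonneg_of_eq_zero_of_pos_right hwα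
          (eventually_of_mem (Ioc_mem_nhdsGT hα.2) hpos))
    · push Not at h
      exact ⟨0, le_rfl, hr, hq0.ge, fun y hy => h y ⟨hy.1.le, hy.2⟩⟩
  exact hqα.trans_lt (hq_mono α r hα0 (fun y hy => hpos y (Ioo_subset_Ioc_self hy))
    (left_mem_Icc.2 hαr.le) (right_mem_Icc.2 hαr.le) hαr)

theorem neg_of_strictMonoOn_of_zero_right (hw : ContinuousOn w (Ici 0))
    (hw' : ∀ r > 0, HasDerivAt w (w' r) r)
    (hq_mono : ∀ a b, 0 ≤ a → (∀ y ∈ Ioo a b, 0 < w y) → StrictMonoOn q (Icc a b))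
    (hq_lim : Tendsto q atTop (𝓝 0)) (hq_zero : ∀ r > 0, w r = 0 → ∃ ρ ≥ 0, q r = ρ * w' r)
    {r : ℝ} (hr : 0 < r) (hwr : 0 < w r) : q r < 0 := by
  by_cases h : ∃ b ≥ r, w b ≤ 0
  · obtain ⟨b, hb, hwb⟩ := h
    obtain ⟨β, hβ, hwβ, hpos⟩ :=
      exists_zero_of_pos_of_nonpos hb (hw.mono fun y hy => hr.le.trans hy.1) hwr hwb
    have hβ0 : 0 < β := hr.trans hβ.1
    obtain ⟨ρ, hρ, hqβ⟩ := hq_zero β hβ0 hwβ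
    have hqβ_nonpos : q β ≤ 0 := hqβ ▸ mul_nonpos_of_nonneg_of_nonpos hρ
      ((hw' β hβ0).nonpos_of_eq_zero_of_pos_left hwβ (eventually_of_mem (Ico_mem_nhdsLT hβ.1) hpos))
    exact (hq_mono r β hr.le (fun y hy => hpos y (Ioo_subset_Ico_self hy))
      (left_mem_Icc.2 hβ.1.le) (right_mem_Icc.2 hβ.1.le) hβ.1).trans_le hqβ_nonpos
  · push Not at h
    have hmono : ∀ b, StrictMonoOn q (Icc r b) := fun b =>
      hq_mono r b hr.le fun y hy => h y hy.1.le
    have hq1 : q (r + 1) ≤ 0 := ge_of_tendsto hq_lim <| eventually_atTop.2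
      ⟨r + 1, fun b hb => (hmono b).monotoneOn ⟨by linarith, hb⟩ ⟨by linarith, le_rfl⟩ hb⟩
    exact ((hmono (r + 1)) (left_mem_Icc.2 (by linarith)) ⟨by linarith, le_rfl⟩
      (by linarith)).trans_le hq1

theorem nonpos_of_wronskian (hw : ContinuousOn w (Ici 0)) (hw' : ∀ r > 0, HasDerivAt w (w' r) r)
    (hq : ContinuousOn q (Ici 0)) (hq' : ∀ r > 0, HasDerivAt q (q' r) r)
    (hq'_pos : ∀ r > 0, 0 < w r → 0 < q' r) (hq0 : q 0 = 0) (hq_lim : Tendsto q atTop (𝓝 0))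
    (hq_zero : ∀ r > 0, w r = 0 → ∃ ρ ≥ 0, q r = ρ * w' r) : ∀ r ≥ 0, w r ≤ 0 := by
  have hq_mono : ∀ a b, 0 ≤ a → (∀ y ∈ Ioo a b, 0 < w y) → StrictMonoOn q (Icc a b) := by
    intro a b ha hpos
    refine strictMonoOn_of_hasDerivWithinAt_pos (f' := q') (convex_Icc a b)
      (hq.mono fun y hy => ha.trans hy.1) (fun y hy => ?_) fun y hy => ?_
    · rw [interior_Icc] at hy ⊢
      exact (hq' y (ha.trans_lt hy.1)).hasDerivWithinAt
    · rw [interior_Icc] at hy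
      exact hq'_pos y (ha.trans_lt hy.1) (hpos y hy)
  have hpos : ∀ r > 0, w r ≤ 0 := fun r hr => not_lt.1 fun hwr =>
    lt_asymm (pos_of_strictMonoOn_of_zero_left hw hw' hq_mono hq0 hq_zero hr hwr)
      (neg_of_strictMonoOn_of_zero_right hw hw' hq_mono hq_lim hq_zero hr hwr)
  intro r hr
  rcases hr.eq_or_lt with rfl | hr
  · exact ContinuousWithinAt.closure_le (by rw [closure_Ioi]; exact self_mem_Ici)
      ((hw 0 self_mem_Ici).mono Ioi_subset_Ici_self) continuousWithinAt_const hpos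
  · exact hpos r hr

end Wronskian

theorem rpow_le_rpow_sub_one_mul {z M p : ℝ} (hz : 0 ≤ z) (hzM : z ≤ M) (hp : 1 ≤ p) :
    z ^ p ≤ M ^ (p - 1) * z :=
  calc z ^ p = z ^ (p - 1) * z := by rw [← rpow_add_one' hz (by linarith), sub_add_cancel]
    _ ≤ M ^ (p - 1) * z := mul_le_mul_of_nonneg_right (rpow_le_rpow hz hzM (by linarith)) hz

theorem abs_mul_sub_mul_le {a b a' b' E : ℝ} (ha : |a| ≤ E) (hb : |b| ≤ E) (ha' : |a'| ≤ E)
    (hb' : |b'| ≤ E) : |a' * b - a * b'| ≤ 2 * E ^ 2 :=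
  calc |a' * b - a * b'| ≤ |a'| * |b| + |a| * |b'| := by
        simpa only [abs_mul] using abs_sub (a' * b) (a * b')
    _ ≤ E * E + E * E := add_le_add (mul_le_mul ha' hb (abs_nonneg _) ((abs_nonneg _).trans ha'))
        (mul_le_mul ha hb' (abs_nonneg _) ((abs_nonneg _).trans ha))
    _ = 2 * E ^ 2 := by ring

theorem tendsto_pow_mul_of_abs_le_mul_exp {φ : ℝ → ℝ} {c σ : ℝ} (k : ℕ) (hσ : 0 < σ)
    (h : ∀ᶠ r in atTop, |φ r| ≤ c * exp (-σ * r)) :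
    Tendsto (fun r => r ^ k * φ r) atTop (𝓝 0) := by
  have hlim := (tendsto_rpow_mul_exp_neg_mul_atTop_nhds_zero k σ hσ).const_mul c
  rw [mul_zero] at hlim
  refine squeeze_zero_norm' ?_ hlim
  filter_upwards [h, eventually_ge_atTop 0] with r hr hr0
  rw [norm_mul, norm_pow, Real.norm_eq_abs, Real.norm_eq_abs, abs_of_nonneg hr0, rpow_natCast]
  calc r ^ k * |φ r| ≤ r ^ k * (c * exp (-σ * r)) := mul_le_mul_of_nonneg_left hr (by positivity)
    _ = c * (r ^ k * exp (-σ * r)) := by ring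

theorem add_swap_le_of_forall_ne {f : ℝ → ℝ → ℝ → ℝ} {r m ε z₁ z₂ : ℝ} (hr : 0 ≤ r)
    (hf : ContinuousOn (fun p : ℝ × ℝ × ℝ => f p.1 p.2.1 p.2.2)
      {p : ℝ × ℝ × ℝ | 0 ≤ p.1 ∧ 0 ≤ p.2.1 ∧ 0 ≤ p.2.2})
    (h : ∀ z₁ ∈ Ioo 0 ε, ∀ z₂ ∈ Ioo 0 ε, z₁ ≠ z₂ → (f r z₁ z₂ + f r z₂ z₁) / (z₁ + z₂) ≤ -m)
    (hz₁ : z₁ ∈ Ioo 0 ε) (hz₂ : z₂ ∈ Ioo 0 ε) : f r z₁ z₂ + f r z₂ z₁ ≤ -m * (z₁ + z₂) := by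
  have hoff : ∀ z₂ ∈ Ioo 0 ε, z₁ ≠ z₂ → f r z₁ z₂ + f r z₂ z₁ ≤ -m * (z₁ + z₂) :=
    fun z₂ hz₂ hne => (div_le_iff₀ (add_pos hz₁.1 hz₂.1)).1 (h z₁ hz₁ z₂ hz₂ hne)
  obtain rfl | hne := eq_or_ne z₁ z₂
  · have hz := hf.continuousWithinAt (x := (r, z₁, z₁)) ⟨hr, hz₁.1.le, hz₁.1.le⟩
    have h₁ : ContinuousWithinAt (fun t => f r z₁ t) (Ioo 0 z₁) z₁ :=
      hz.comp (f := fun t => (r, z₁, t)) (by fun_prop) fun t ht => ⟨hr, hz₁.1.le, ht.1.le⟩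
    have h₂ : ContinuousWithinAt (fun t => f r t z₁) (Ioo 0 z₁) z₁ :=
      hz.comp (f := fun t => (r, t, z₁)) (by fun_prop) fun t ht => ⟨hr, ht.1.le, hz₁.1.le⟩
    exact ContinuousWithinAt.closure_le
      (by rw [closure_Ioo hz₁.1.ne]; exact right_mem_Icc.2 hz₁.1.le) (h₁.add h₂)
      (by fun_prop) fun t ht => hoff t ⟨ht.1, ht.2.trans hz₁.2⟩ ht.2.ne'
  · exact hoff z₂ hz₂ hne

namespace IsPosSol

variable {n : ℕ} {f : ℝ → ℝ → ℝ → ℝ} {u u' u'' v v' v'' : ℝ → ℝ}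

theorem symm (h : IsPosSol n f u u' u'' v v' v'') : IsPosSol n f v v' v'' u u' u'' :=
  let ⟨hu, hv, hpos, hequ, heqv, hu0, hv0, hlim_u, hlim_v⟩ := h
  ⟨hv, hu, fun r hr => (hpos r hr).symm, heqv, hequ, hv0, hu0, hlim_v, hlim_u⟩

theorem radial (hn : 1 ≤ n) (h : IsPosSol n f u u' u'' v v' v'') {r : ℝ} (hr : 0 < r) :
    u'' r + ((n - 1 : ℕ) : ℝ) / r * u' r = -f r (u r) (v r) := by
  rw [Nat.cast_sub hn, Nat.cast_one, ← h.2.2.2.1 r hr]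
  ring

theorem exists_add_le_mul_exp {m R ε : ℝ} (hn : 1 ≤ n) (hm : 0 < m) (hε : 0 < ε)
    (hf : ContinuousOn (fun p : ℝ × ℝ × ℝ => f p.1 p.2.1 p.2.2)
      {p : ℝ × ℝ × ℝ | 0 ≤ p.1 ∧ 0 ≤ p.2.1 ∧ 0 ≤ p.2.2})
    (hA2 : ∀ r > R, ∀ z₁ ∈ Ioo 0 ε, ∀ z₂ ∈ Ioo 0 ε, z₁ ≠ z₂ →
      (f r z₁ z₂ + f r z₂ z₁) / (z₁ + z₂) ≤ -m)
    (h : IsPosSol n f u u' u'' v v' v'') : ∃ c > 0, ∀ r ≥ 0, u r + v r ≤ c * exp (-√m * r) := by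
  have hrad_u := fun r (hr : 0 < r) => h.radial hn hr
  have hrad_v := fun r (hr : 0 < r) => h.symm.radial hn hr
  obtain ⟨hu, hv, hpos, -, -, -, -, hlim_u, hlim_v⟩ := h
  obtain ⟨a, ha⟩ := eventually_atTop.1 <|
    ((hlim_u.eventually (eventually_lt_nhds hε)).and
      (hlim_v.eventually (eventually_lt_nhds hε))).and (eventually_gt_atTop (max R 0))
  have ha0 : 0 < a := (le_max_right R 0).trans_lt (ha a le_rfl).2
  have hsuper : ∀ r > a, m * (u r + v r) ≤
      (u'' r + v'' r) + ((n - 1 : ℕ) : ℝ) / r * (u' r + v' r) := by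
    intro r hr
    obtain ⟨⟨hu_small, hv_small⟩, hrR⟩ := ha r hr.le
    have hr0 : 0 < r := ha0.trans hr
    have hA2r := add_swap_le_of_forall_ne hr0.le hf (hA2 r ((le_max_left R 0).trans_lt hrR))
      ⟨(hpos r hr0.le).1, hu_small⟩ ⟨(hpos r hr0.le).2, hv_small⟩
    linear_combination hA2r - hrad_u r hr0 - hrad_v r hr0
  have hdecay := le_mul_exp_of_mul_le_deriv2_add hm (s := fun r => u r + v r)
    ((hu.continuousOn.add hv.continuousOn).mono (Ici_subset_Ici.2 ha0.le))
    (fun r hr => (hu.hasDerivAt (ha0.trans hr)).add (hv.hasDerivAt (ha0.trans hr)))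
    (fun r hr => (hu.hasDerivAt_deriv (ha0.trans hr)).add (hv.hasDerivAt_deriv (ha0.trans hr)))
    (fun r hr => div_nonneg (Nat.cast_nonneg _) (ha0.trans hr).le) hsuper
    (add_pos (hpos a ha0.le).1 (hpos a ha0.le).2).le (by simpa using hlim_u.add hlim_v)
  refine exists_le_mul_exp_of_eventually_le (sqrt_nonneg m) (hu.continuousOn.add hv.continuousOn)
    (c := (u a + v a) * exp (√m * a)) ?_
  filter_upwards [eventually_ge_atTop a] with r hr
  calc u r + v r ≤ (u a + v a) * exp (-√m * (r - a)) := hdecay r hr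
    _ = (u a + v a) * exp (√m * a) * exp (-√m * r) := by rw [mul_assoc, ← exp_add]; ring_nf

theorem exists_abs_deriv_le_mul_exp {p C c σ : ℝ} (hn : 1 ≤ n) (hp : 1 ≤ p) (hC : 0 ≤ C)
    (hgrow : ∀ r z₁ z₂ : ℝ, 0 ≤ r → 0 ≤ z₁ → 0 ≤ z₂ →
      |f r z₁ z₂| ≤ C * (|z₁| + |z₂| + |z₁| ^ p + |z₂| ^ p))
    (hσ : 0 ≤ σ) (h : IsPosSol n f u u' u'' v v' v'')
    (hsum : ∀ r ≥ 0, u r + v r ≤ c * exp (-σ * r)) :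
    ∃ c' > 0, ∀ r ≥ 0, |u' r| ≤ c' * exp (-σ * r) := by
  have hpos := h.2.2.1
  have hu_le : ∀ r ≥ 0, u r ≤ c * exp (-σ * r) := fun r hr => by
    linarith [hsum r hr, (hpos r hr).2]
  have hv_le : ∀ r ≥ 0, v r ≤ c * exp (-σ * r) := fun r hr => by
    linarith [hsum r hr, (hpos r hr).1]
  have hc : 0 ≤ c := by simpa using ((hpos 0 le_rfl).1.trans_le (hu_le 0 le_rfl)).le
  have hle_c : ∀ r ≥ 0, c * exp (-σ * r) ≤ c := fun r hr =>
    mul_le_of_le_one_right hc (exp_le_one_iff.2 (by nlinarith))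
  refine h.1.exists_abs_deriv_le_mul_exp (k := n - 1) hσ (A := c) (B := C * (1 + c ^ (p - 1)) * c)
    (fun r hr => (abs_of_pos (hpos r hr).1).symm ▸ hu_le r hr) fun r hr => ?_
  obtain ⟨hu0, hv0⟩ := hpos r hr.le
  have hup := rpow_le_rpow_sub_one_mul hu0.le ((hu_le r hr.le).trans (hle_c r hr.le)) hp
  have hvp := rpow_le_rpow_sub_one_mul hv0.le ((hv_le r hr.le).trans (hle_c r hr.le)) hp
  rw [h.radial hn hr, abs_neg]
  calc |f r (u r) (v r)| ≤ C * (u r + v r + u r ^ p + v r ^ p) := by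
        simpa [abs_of_pos hu0, abs_of_pos hv0] using hgrow r (u r) (v r) hr.le hu0.le hv0.le
    _ ≤ C * ((1 + c ^ (p - 1)) * (u r + v r)) := mul_le_mul_of_nonneg_left (by linarith) hC
    _ ≤ C * ((1 + c ^ (p - 1)) * (c * exp (-σ * r))) :=
        mul_le_mul_of_nonneg_left (mul_le_mul_of_nonneg_left (hsum r hr.le) (by positivity)) hC
    _ = C * (1 + c ^ (p - 1)) * c * exp (-σ * r) := by ring

theorem exists_le_mul_exp {m R ε : ℝ} (hn : 1 ≤ n) (hm : 0 < m) (hε : 0 < ε) (hA1 : A1 f)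
    (hA2 : ∀ r > R, ∀ z₁ ∈ Ioo 0 ε, ∀ z₂ ∈ Ioo 0 ε, z₁ ≠ z₂ →
      (f r z₁ z₂ + f r z₂ z₁) / (z₁ + z₂) ≤ -m)
    (h : IsPosSol n f u u' u'' v v' v'') :
    ∃ c > 0, ∀ r > 0, u r ≤ c * exp (-√m * r) ∧ v r ≤ c * exp (-√m * r) ∧
      |u' r| ≤ c * exp (-√m * r) ∧ |v' r| ≤ c * exp (-√m * r) := by
  obtain ⟨c₁, hc₁, hsum⟩ := h.exists_add_le_mul_exp hn hm hε hA1.1 hA2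
  obtain ⟨p, hp, C, hC, hgrow⟩ := hA1.2.2
  obtain ⟨c₂, hc₂, hu'⟩ :=
    h.exists_abs_deriv_le_mul_exp hn hp.le hC.le hgrow (sqrt_nonneg m) hsum
  obtain ⟨c₃, hc₃, hv'⟩ := h.symm.exists_abs_deriv_le_mul_exp hn hp.le hC.le hgrow
    (sqrt_nonneg m) fun r hr => add_comm (u r) (v r) ▸ hsum r hr
  refine ⟨c₁ + c₂ + c₃, by positivity, fun r hr => ?_⟩
  have he := exp_pos (-√m * r)
  have hsum_r := hsum r hr.le
  have hu'_r := hu' r hr.le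
  have hv'_r := hv' r hr.le
  obtain ⟨hu0, hv0⟩ := h.2.2.1 r hr.le
  refine ⟨?_, ?_, ?_, ?_⟩ <;> nlinarith

theorem le_of_forall_le_mul_exp {c σ : ℝ} (hn : 1 ≤ n) (hσ : 0 < σ)
    (hA3 : ∀ r > (0:ℝ), ∀ z₁ z₂ : ℝ, 0 < z₂ → z₂ < z₁ → f r z₁ z₂ * z₂ < f r z₂ z₁ * z₁)
    (h : IsPosSol n f u u' u'' v v' v'')
    (hdecay : ∀ r > 0, u r ≤ c * exp (-σ * r) ∧ v r ≤ c * exp (-σ * r) ∧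
      |u' r| ≤ c * exp (-σ * r) ∧ |v' r| ≤ c * exp (-σ * r)) :
    ∀ r ≥ 0, u r ≤ v r := by
  have hrad_u := fun r (hr : 0 < r) => h.radial hn hr
  have hrad_v := fun r (hr : 0 < r) => h.symm.radial hn hr
  obtain ⟨hu, hv, hpos, -, -, hu'0, hv'0, -, -⟩ := h
  have hwronskian : ∀ r > 0, |u' r * v r - u r * v' r| ≤ 2 * c ^ 2 * exp (-(2 * σ) * r) := by
    intro r hr
    obtain ⟨h₁, h₂, h₃, h₄⟩ := hdecay r hr
    obtain ⟨hu0, hv0⟩ := hpos r hr.le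
    calc |u' r * v r - u r * v' r| ≤ 2 * (c * exp (-σ * r)) ^ 2 :=
          abs_mul_sub_mul_le ((abs_of_pos hu0).trans_le h₁) ((abs_of_pos hv0).trans_le h₂) h₃ h₄
      _ = 2 * c ^ 2 * exp (-(2 * σ) * r) := by
          rw [show -(2 * σ) * r = -σ * r + -σ * r by ring, exp_add]
          ring
  have key := nonpos_of_wronskian (w := fun r => u r - v r) (w' := fun r => u' r - v' r)
    (q := fun r => r ^ (n - 1) * (u' r * v r - u r * v' r))
    (q' := fun r => r ^ (n - 1) * (f r (v r) (u r) * u r - f r (u r) (v r) * v r))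
    (hu.continuousOn.sub hv.continuousOn)
    (fun r hr => (hu.hasDerivAt hr).sub (hv.hasDerivAt hr))
    ((continuous_pow _).continuousOn.mul ((hu.continuousOn_deriv.mul hv.continuousOn).sub
      (hu.continuousOn.mul hv.continuousOn_deriv)))
    (fun r hr => ((((hu.hasDerivAt_deriv hr).mul (hv.hasDerivAt hr)).sub
      ((hu.hasDerivAt hr).mul (hv.hasDerivAt_deriv hr))).pow_mul_of_pos (n - 1) hr).congr_deriv
        (by simp only [Pi.sub_apply, Pi.mul_apply]
            linear_combination
              (r ^ (n - 1) * v r) * hrad_u r hr - (r ^ (n - 1) * u r) * hrad_v r hr))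
    (fun r hr hw => mul_pos (pow_pos hr _) (by
      linarith [hA3 r hr (u r) (v r) (hpos r hr.le).2 (sub_pos.1 hw)]))
    (by simp [hu'0, hv'0])
    (tendsto_pow_mul_of_abs_le_mul_exp (n - 1) (by positivity)
      ((eventually_gt_atTop 0).mono hwronskian))
    (fun r hr hw => ⟨r ^ (n - 1) * v r, mul_nonneg (pow_nonneg hr.le _) (hpos r hr.le).2.le, by
      rw [sub_eq_zero.1 hw]; ring⟩)
  exact fun r hr => sub_nonpos.1 (key r hr)

end IsPosSol

theorem uniqueness_A1_A2_A3 (n : ℕ) (hn : 1 ≤ n) (f : ℝ → ℝ → ℝ → ℝ)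
    (m R ε : ℝ) (hm : 0 < m) (hε : 0 < ε)
    (hA1 : A1 f)
    (hA2 : ∀ r > R, ∀ z₁ ∈ Set.Ioo 0 ε, ∀ z₂ ∈ Set.Ioo 0 ε, z₁ ≠ z₂ →
      (f r z₁ z₂ - f r z₂ z₁) / (z₁ - z₂) ≤ -m ∧
      (f r z₁ z₂ + f r z₂ z₁) / (z₁ + z₂) ≤ -m)
    (hA3 : ∀ r > (0:ℝ), ∀ z₁ z₂ : ℝ, 0 < z₂ → z₂ < z₁ →
      f r z₁ z₂ * z₂ < f r z₂ z₁ * z₁)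
    (u u' u'' v v' v'' : ℝ → ℝ)
    (hsol : IsPosSol n f u u' u'' v v' v'') :
    (∀ r : ℝ, 0 ≤ r → u r = v r) ∧
    ∃ c > 0, ∀ r > (0:ℝ), u r + |u' r| ≤ c * Real.exp (-Real.sqrt m * r) := by
  obtain ⟨c, hc, hdecay⟩ := hsol.exists_le_mul_exp hn hm hε hA1
    fun r hr z₁ hz₁ z₂ hz₂ hne => (hA2 r hr z₁ hz₁ z₂ hz₂ hne).2
  have huv := hsol.le_of_forall_le_mul_exp hn (sqrt_pos.2 hm) hA3 hdecay
  have hvu := hsol.symm.le_of_forall_le_mul_exp hn (sqrt_pos.2 hm) hA3 fun r hr =>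
    let ⟨h₁, h₂, h₃, h₄⟩ := hdecay r hr
    ⟨h₂, h₁, h₄, h₃⟩
  refine ⟨fun r hr => (huv r hr).antisymm (hvu r hr), 2 * c, by positivity, fun r hr => ?_⟩
  linarith [(hdecay r hr).1, (hdecay r hr).2.2.1]
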